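/- Let μ be a probability measure on a product space modeling (adversary knowledge, query output), with conditional indistinguishability: for all measurable sets E of outputs and Z of adversary values, μ_i(E | Z) ≤ e^ε μ(E | Z) + δ and μ(E | Z) ≤ e^ε μ_i(E | Z) + δ, whenever μ(Z) > 0 and μ_i(Z) > 0 with μ(Z) = μ_i(Z). Then the unconditional measures satisfy μ_i(E) ≤ e^ε μ(E) + δ and μ(E) ≤ e^ε μ_i(E) + δ for every measurable E, provided the adversary information is partitioned into countably many sets Z_k of equal mass under μ and μ_i. -/

import Mathlib

open MeasureTheory

/-
Each cell `Z k × O` has the same mass `m` under both measures, so multiplying the conditional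
bound by `m` gives `μi (Z k × E) ≤ e^ε μ (Z k × E) + δ m` (trivially so when `m = 0`).
Summing over the countable partition, the masses `m` add up to `1`.
-/

theorem ENNReal.le_mul_add_mul_of_div_le {a b c d m : ENNReal} (hm0 : m ≠ 0) (hmt : m ≠ ⊤)
    (h : a / m ≤ c * (b / m) + d) : a ≤ c * b + d * m := by
  rw [ENNReal.div_le_iff hm0 hmt, add_mul, mul_assoc, ENNReal.div_mul_cancel hm0 hmt] at h
  exact h

section Partition

variable {A O : Type*} [MeasurableSpace A] [MeasurableSpace O]

theorem measure_prod_le_of_cond_le {m m' : Measure (A × O)} [IsFiniteMeasure m]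
    {c d : ENNReal} {S : Set A} {E : Set O}
    (hmass : m (S ×ˢ Set.univ) = m' (S ×ˢ Set.univ))
    (hcond : 0 < m (S ×ˢ Set.univ) → 0 < m' (S ×ˢ Set.univ) →
      m' (S ×ˢ E) / m' (S ×ˢ Set.univ) ≤ c * (m (S ×ˢ E) / m (S ×ˢ Set.univ)) + d) :
    m' (S ×ˢ E) ≤ c * m (S ×ˢ E) + d * m (S ×ˢ Set.univ) := by
  by_cases h0 : m (S ×ˢ Set.univ) = 0
  · have hE : m' (S ×ˢ E) = 0 :=
      measure_mono_null (Set.prod_mono_right (Set.subset_univ E)) (hmass ▸ h0)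
    simp [hE]
  · have hpos := pos_iff_ne_zero.mpr h0
    have h := hcond hpos (hmass ▸ hpos)
    rw [← hmass] at h
    exact ENNReal.le_mul_add_mul_of_div_le h0 (measure_ne_top m _) h

theorem measure_univ_prod_eq_tsum {Z : ℕ → Set A} (hZmeas : ∀ k, MeasurableSet (Z k))
    (hZdisj : Pairwise (Function.onFun Disjoint Z)) (hZcover : (⋃ k, Z k) = Set.univ)
    (m : Measure (A × O)) {F : Set O} (hF : MeasurableSet F) :
    m (Set.univ ×ˢ F) = ∑' k, m (Z k ×ˢ F) := by
  rw [← hZcover, Set.iUnion_prod_const, measure_iUnion]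
  · exact fun i j hij => Set.disjoint_prod.mpr (Or.inl (hZdisj hij))
  · exact fun k => (hZmeas k).prod hF

theorem measure_univ_prod_le_of_forall_cell {Z : ℕ → Set A}
    (hZmeas : ∀ k, MeasurableSet (Z k)) (hZdisj : Pairwise (Function.onFun Disjoint Z))
    (hZcover : (⋃ k, Z k) = Set.univ) (ν ν' : Measure (A × O)) [IsProbabilityMeasure ν]
    {c d : ENNReal} {E : Set O} (hE : MeasurableSet E)
    (hcell : ∀ k, ν' (Z k ×ˢ E) ≤ c * ν (Z k ×ˢ E) + d * ν (Z k ×ˢ Set.univ)) :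
    ν' (Set.univ ×ˢ E) ≤ c * ν (Set.univ ×ˢ E) + d := by
  have hsum := measure_univ_prod_eq_tsum (O := O) hZmeas hZdisj hZcover
  calc ν' (Set.univ ×ˢ E) = ∑' k, ν' (Z k ×ˢ E) := hsum ν' hE
    _ ≤ ∑' k, (c * ν (Z k ×ˢ E) + d * ν (Z k ×ˢ Set.univ)) := ENNReal.tsum_le_tsum hcell
    _ = c * ν (Set.univ ×ˢ E) + d * ν (Set.univ ×ˢ Set.univ) := by
      rw [ENNReal.tsum_add, ENNReal.tsum_mul_left, ENNReal.tsum_mul_left,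
        ← hsum ν hE, ← hsum ν MeasurableSet.univ]
    _ = c * ν (Set.univ ×ˢ E) + d := by rw [Set.univ_prod_univ, measure_univ, mul_one]

end Partition

theorem conditional_privacy_implies_unconditional_general
    {A O : Type*} [MeasurableSpace A] [MeasurableSpace O]
    (μ μi : Measure (A × O)) [IsProbabilityMeasure μ] [IsProbabilityMeasure μi]
    (ε δ : ℝ)
    (Z : ℕ → Set A) (hZmeas : ∀ k, MeasurableSet (Z k))
    (hZdisj : Pairwise (Function.onFun Disjoint Z))
    (hZcover : (⋃ k, Z k) = Set.univ)
    (hmass : ∀ k, μ (Z k ×ˢ (Set.univ : Set O)) = μi (Z k ×ˢ (Set.univ : Set O)))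
    (hcond : ∀ k, ∀ E : Set O, MeasurableSet E →
        0 < μ (Z k ×ˢ (Set.univ : Set O)) → 0 < μi (Z k ×ˢ (Set.univ : Set O)) →
        μi (Z k ×ˢ E) / μi (Z k ×ˢ (Set.univ : Set O)) ≤
            ENNReal.ofReal (Real.exp ε) * (μ (Z k ×ˢ E) / μ (Z k ×ˢ (Set.univ : Set O)))
              + ENNReal.ofReal δ ∧
        μ (Z k ×ˢ E) / μ (Z k ×ˢ (Set.univ : Set O)) ≤
            ENNReal.ofReal (Real.exp ε) * (μi (Z k ×ˢ E) / μi (Z k ×ˢ (Set.univ : Set O)))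
              + ENNReal.ofReal δ) :
    ∀ E : Set O, MeasurableSet E →
      μi ((Set.univ : Set A) ×ˢ E) ≤
          ENNReal.ofReal (Real.exp ε) * μ ((Set.univ : Set A) ×ˢ E) + ENNReal.ofReal δ ∧
      μ ((Set.univ : Set A) ×ˢ E) ≤
          ENNReal.ofReal (Real.exp ε) * μi ((Set.univ : Set A) ×ˢ E) + ENNReal.ofReal δ := by
  intro E hE
  exact ⟨measure_univ_prod_le_of_forall_cell hZmeas hZdisj hZcover μ μi hE fun k =>
      measure_prod_le_of_cond_le (hmass k) fun h h' => (hcond k E hE h h').1,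
    measure_univ_prod_le_of_forall_cell hZmeas hZdisj hZcover μi μ hE fun k =>
      measure_prod_le_of_cond_le (hmass k).symm fun h' h => (hcond k E hE h h').2⟩

/-- Conditional (adversarial) `(ε,δ)`-indistinguishability over a countable partition of
adversary information with matching marginal masses implies unconditional
`(ε,δ)`-indistinguishability. -/
theorem conditional_privacy_implies_unconditional
    {A O : Type*} [MeasurableSpace A] [MeasurableSpace O]
    (μ μi : Measure (A × O)) [IsProbabilityMeasure μ] [IsProbabilityMeasure μi]
    (ε δ : ℝ) (hε : 0 < ε) (hδ0 : 0 ≤ δ) (hδ1 : δ ≤ 1)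
    (Z : ℕ → Set A) (hZmeas : ∀ k, MeasurableSet (Z k))
    (hZdisj : Pairwise (Function.onFun Disjoint Z))
    (hZcover : (⋃ k, Z k) = Set.univ)
    (hmass : ∀ k, μ (Z k ×ˢ (Set.univ : Set O)) = μi (Z k ×ˢ (Set.univ : Set O)))
    (hcond : ∀ k, ∀ E : Set O, MeasurableSet E →
        0 < μ (Z k ×ˢ (Set.univ : Set O)) → 0 < μi (Z k ×ˢ (Set.univ : Set O)) →
        μi (Z k ×ˢ E) / μi (Z k ×ˢ (Set.univ : Set O)) ≤
            ENNReal.ofReal (Real.exp ε) * (μ (Z k ×ˢ E) / μ (Z k ×ˢ (Set.univ : Set O)))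
              + ENNReal.ofReal δ ∧
        μ (Z k ×ˢ E) / μ (Z k ×ˢ (Set.univ : Set O)) ≤
            ENNReal.ofReal (Real.exp ε) * (μi (Z k ×ˢ E) / μi (Z k ×ˢ (Set.univ : Set O)))
              + ENNReal.ofReal δ) :
    ∀ E : Set O, MeasurableSet E →
      μi ((Set.univ : Set A) ×ˢ E) ≤
          ENNReal.ofReal (Real.exp ε) * μ ((Set.univ : Set A) ×ˢ E) + ENNReal.ofReal δ ∧
      μ ((Set.univ : Set A) ×ˢ E) ≤
          ENNReal.ofReal (Real.exp ε) * μi ((Set.univ : Set A) ×ˢ E) + ENNReal.ofReal δ :=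
  conditional_privacy_implies_unconditional_general μ μi ε δ Z hZmeas hZdisj hZcover hmass hcond
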